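/- arXiv:2307.04896 — 3 statements merged into one kernel-verified Lean document; each statement's English description precedes it below -/
import Mathlib

section
/- Let n ≥ 1, let Ω ⊆ ℂ be a nonempty open connected set, and let Γ* ⊂ ℂ be a lattice (the set of ℤ-linear combinations of two ℝ-linearly independent complex numbers). Let Q : Ω × ℂ → Matrix (Fin n) (Fin n) ℂ be holomorphic in (α,k) (jointly analytic), and suppose there exist maps W_X, W_Y : Γ* → GL(Fin n, ℂ) such that Q(α, k+γ) = (W_Y(γ))⁻¹ * Q(α,k) * W_X(γ) for all α ∈ Ω, k ∈ ℂ, γ ∈ Γ*. For α ∈ Ω define m(α,k) ∈ ℕ ∪ {∞} by: if the entire function k' ↦ det Q(α,k') is not identically zero, m(α,k) is the order of vanishing of k' ↦ det Q(α,k') at k' = k; otherwise m(α,k) = ∞ for all k. Assume there exists α₀ ∈ Ω such that for every α ∈ Ω and every k ∈ ℂ one has m(α₀,k) < ∞ and m(α,k) ≥ m(α₀,k). Then there exists a set A ⊆ Ω, discrete in Ω (A has no accumulation point in Ω), such that: for every α ∈ A and every k ∈ ℂ, m(α,k) = ∞; and for every α ∈ Ω \ A and every k ∈ ℂ, m(α,k)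 = m(α₀,k). -/
/-!
For `α ∈ Ω` the entire function `D_α = det Q(α, ·)` is quasi-periodic,
`D_α(k + γ) = c(γ) D_α(k)`, with the multiplier `c(γ) = det W_Y(γ)⁻¹ · det W_X(γ)` independent
of `α`. Since `D_α` vanishes at every point to at least the order of `D_{α₀}`, the quotient
`D_α / D_{α₀}` is entire and `Γ*`-periodic, hence bounded on the compact fundamental
parallelogram and constant by Liouville: `D_α = C(α) D_{α₀}`. Fixing `k₂` with
`D_{α₀}(k₂) ≠ 0`, `C(α) = D_α(k₂) / D_{α₀}(k₂)` vanishes exactly where the analytic function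
`α ↦ D_α(k₂)` does, and this zero set `A` is discrete in `Ω`. Off `A` the orders of `D_α` and
`D_{α₀}` agree; on `A` the determinant vanishes identically.
-/

open Filter Set Topology Function

theorem analyticAt_det {𝕜 E ι : Type*} [NontriviallyNormedField 𝕜] [NormedAddCommGroup E]
    [NormedSpace 𝕜 E] [Fintype ι] [DecidableEq ι] {f : E → Matrix ι ι 𝕜} {x : E}
    (hf : ∀ i j, AnalyticAt 𝕜 (fun z => f z i j) x) : AnalyticAt 𝕜 (fun z => (f z).det) x := by
  simp only [Matrix.det_apply']
  exact Finset.analyticAt_fun_sum _ fun σ _ =>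
    analyticAt_const.mul (Finset.analyticAt_fun_prod _ fun i _ => hf (σ i) i)

theorem AnalyticOnNhd.not_accPt_setOf_eq_zero {𝕜 E : Type*} [NontriviallyNormedField 𝕜]
    [NormedAddCommGroup E] [NormedSpace 𝕜 E] {f : 𝕜 → E} {U : Set 𝕜}
    (hf : AnalyticOnNhd 𝕜 f U) (hU : IsConnected U) {x : 𝕜} (hx : x ∈ U) (hfx : f x ≠ 0)
    {z : 𝕜} (hz : z ∈ U) : ¬ AccPt z (𝓟 {y ∈ U | f y = 0}) := by
  have hcodiscrete := hf.preimage_zero_mem_codiscreteWithin hfx hx hU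
  rw [mem_codiscreteWithin] at hcodiscrete
  have hzeros : U \ f ⁻¹' {0}ᶜ = {y ∈ U | f y = 0} := by ext; simp
  rw [AccPt, ← hzeros]
  exact fun hacc => hacc.ne (disjoint_iff.1 (hcodiscrete z hz))

section AnalyticOrder

variable {𝕜 : Type*} [NontriviallyNormedField 𝕜]

theorem analyticOrderAt_eq_natCast_of_eq_pow_mul {f g : 𝕜 → 𝕜} {z₀ : 𝕜} {N : ℕ}
    (hg : AnalyticAt 𝕜 g z₀) (hgz₀ : g z₀ ≠ 0) (hfg : ∀ z, f z = (z - z₀) ^ N * g z) :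
    analyticOrderAt f z₀ = N := by
  rw [show f = fun z => (z - z₀) ^ N * g z from funext hfg]
  exact (((analyticAt_id.sub analyticAt_const).pow N).mul hg).analyticOrderAt_eq_natCast.2
    ⟨g, hg, hgz₀, .of_forall fun z => rfl⟩

theorem eq_analyticOrderAt_of_forall_eq_pow_mul {f : 𝕜 → 𝕜} {m : 𝕜 → ℕ∞}
    (hm_top : (∀ k, f k = 0) → ∀ k, m k = ⊤)
    (hm_fin : ¬ (∀ k, f k = 0) → ∀ k, ∃ (N : ℕ) (g : 𝕜 → 𝕜), m k = N ∧
      AnalyticOnNhd 𝕜 g univ ∧ g k ≠ 0 ∧ ∀ k', f k' = (k' - k) ^ N * g k')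
    (k : 𝕜) : m k = analyticOrderAt f k := by
  by_cases hzero : ∀ k, f k = 0
  · rw [hm_top hzero k, eq_comm, analyticOrderAt_eq_top]
    exact .of_forall hzero
  · obtain ⟨N, g, hmN, hg, hgk, hfac⟩ := hm_fin hzero k
    rw [hmN, analyticOrderAt_eq_natCast_of_eq_pow_mul (hg k (mem_univ k)) hgk hfac]

theorem analyticOrderAt_const_mul {f : 𝕜 → 𝕜} {z₀ c : 𝕜} (hc : c ≠ 0) (hf : AnalyticAt 𝕜 f z₀) :
    analyticOrderAt (fun z => c * f z) z₀ = analyticOrderAt f z₀ := by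
  have hc_order : analyticOrderAt (fun _ => c) z₀ = 0 := analyticOrderAt_eq_zero.2 (Or.inr hc)
  rw [← zero_add (analyticOrderAt f z₀), ← hc_order]
  exact analyticOrderAt_mul analyticAt_const hf

theorem AnalyticOnNhd.exists_eq_mul_of_analyticOrderAt_le {U : Set 𝕜} {f g : 𝕜 → 𝕜}
    (hf : AnalyticOnNhd 𝕜 f U) (hg : AnalyticOnNhd 𝕜 g U)
    (hord : ∀ z ∈ U, analyticOrderAt g z ≤ analyticOrderAt f z) :
    ∃ h : 𝕜 → 𝕜, AnalyticOnNhd 𝕜 h U ∧ EqOn f (h * g) U := by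
  have hfg : MeromorphicOn (f / g) U := hf.meromorphicOn.div hg.meromorphicOn
  -- the normal form fills in the singularities of `f / g`, all removable by `hord`
  set h := toMeromorphicNFOn (f / g) U
  have hh : AnalyticOnNhd 𝕜 h U := by
    intro z hz
    rw [← (meromorphicNFOn_toMeromorphicNFOn _ _ hz).meromorphicOrderAt_nonneg_iff_analyticAt,
      meromorphicOrderAt_toMeromorphicNFOn hfg hz,
      meromorphicOrderAt_div (hf z hz).meromorphicAt (hg z hz).meromorphicAt,
      (hf z hz).meromorphicOrderAt_eq, (hg z hz).meromorphicOrderAt_eq]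
    have := hord z hz
    cases hfz : analyticOrderAt f z <;> cases hgz : analyticOrderAt g z <;> simp_all
    exact WithTop.coe_le_coe.2 (sub_nonneg.2 (by exact_mod_cast this))
  refine ⟨h, hh, fun z hz => ?_⟩
  rcases (hg z hz).eventually_eq_zero_or_eventually_ne_zero with hg0 | hg0
  · have hf0 : ∀ᶠ w in 𝓝 z, f w = 0 := by
      rw [← analyticOrderAt_eq_top, ← top_le_iff]
      exact (analyticOrderAt_eq_top.2 hg0).symm.le.trans (hord z hz)
    simp [hf0.self_of_nhds, hg0.self_of_nhds]
  · have hfeq : f =ᶠ[𝓝[≠] z] h * g := by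
      filter_upwards [hfg.toMeromorphicNFOn_eq_self_on_nhdsNE hz, hg0] with w hw hgw
      rw [Pi.mul_apply, show h w = (f / g) w from hw, Pi.div_apply, div_mul_cancel₀ _ hgw]
    exact (((hf z hz).frequently_eq_iff_eventually_eq ((hh z hz).mul (hg z hz))).1
      hfeq.frequently).self_of_nhds

end AnalyticOrder

theorem Differentiable.apply_eq_apply_of_periodic_of_linearIndependent {E : Type*}
    [NormedAddCommGroup E] [NormedSpace ℂ E] {f : ℂ → E} (hf : Differentiable ℂ f)
    {γ₁ γ₂ : ℂ} (hγ : LinearIndependent ℝ ![γ₁, γ₂]) (h₁ : Periodic f γ₁) (h₂ : Periodic f γ₂)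
    (z w : ℂ) : f z = f w := by
  have hcard : Fintype.card (Fin 2) = Module.finrank ℝ ℂ := by
    simp [Complex.finrank_real_complex]
  set B := basisOfLinearIndependentOfCardEqFinrank hγ hcard
  have hB : ⇑B = ![γ₁, γ₂] := coe_basisOfLinearIndependentOfCardEqFinrank hγ hcard
  set P := (fun p : ℝ × ℝ => p.1 • γ₁ + p.2 • γ₂) '' (Icc 0 1 ×ˢ Icc 0 1)
  have hP : IsCompact P := (isCompact_Icc.prod isCompact_Icc).image (by fun_prop)
  have hrange : range f ⊆ f '' P := by
    rintro _ ⟨z, rfl⟩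
    set a := B.repr z 0
    set b := B.repr z 1
    have hz : z = a • γ₁ + b • γ₂ := by
      simpa [Fin.sum_univ_two, hB] using (B.sum_repr z).symm
    refine ⟨z - ⌊a⌋ * γ₁ - ⌊b⌋ * γ₂, ⟨(Int.fract a, Int.fract b),
      ⟨⟨Int.fract_nonneg a, (Int.fract_lt_one a).le⟩,
       ⟨Int.fract_nonneg b, (Int.fract_lt_one b).le⟩⟩, ?_⟩, ?_⟩
    · rw [hz]
      simp only [Int.fract, Complex.real_smul]
      push_cast
      ring
    · rw [h₂.sub_int_mul_eq, h₁.sub_int_mul_eq]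
  exact hf.apply_eq_apply_of_bounded ((hP.image hf.continuous).isBounded.subset hrange) z w

theorem Differentiable.periodic_of_mul_quasiPeriodic {h g : ℂ → ℂ} (hh : Differentiable ℂ h)
    (hg : Continuous g) {z₀ : ℂ} (hgz₀ : g z₀ ≠ 0) {γ c : ℂ} (hg_per : ∀ z, g (z + γ) = c * g z)
    (hhg_per : ∀ z, h (z + γ) * g (z + γ) = c * (h z * g z)) : Periodic h γ := by
  have hne : ∀ᶠ z in 𝓝 (z₀ - γ), g (z + γ) ≠ 0 :=
    (hg.comp (continuous_add_const γ)).continuousAt.eventually_ne (by simpa using hgz₀)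
  have heq : (fun z => h (z + γ)) =ᶠ[𝓝 (z₀ - γ)] h := by
    filter_upwards [hne] with z hz
    refine mul_right_cancel₀ hz ?_
    rw [hhg_per, hg_per]
    ring
  intro z
  exact congrFun (AnalyticOnNhd.eq_of_eventuallyEq
    (fun z _ => (hh.comp (differentiable_id.add_const γ)).analyticAt z)
    (fun z _ => hh.analyticAt z) heq) z

theorem Differentiable.exists_eq_const_mul_of_quasiPeriodic {f g : ℂ → ℂ}
    (hf : Differentiable ℂ f) (hg : Differentiable ℂ g) {z₀ : ℂ} (hgz₀ : g z₀ ≠ 0)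
    (hord : ∀ z, analyticOrderAt g z ≤ analyticOrderAt f z)
    {γ₁ γ₂ : ℂ} (hγ : LinearIndependent ℝ ![γ₁, γ₂]) {c₁ c₂ : ℂ}
    (hf₁ : ∀ z, f (z + γ₁) = c₁ * f z) (hg₁ : ∀ z, g (z + γ₁) = c₁ * g z)
    (hf₂ : ∀ z, f (z + γ₂) = c₂ * f z) (hg₂ : ∀ z, g (z + γ₂) = c₂ * g z) :
    ∃ C : ℂ, f = fun z => C * g z := by
  obtain ⟨h, hh, hfh⟩ := AnalyticOnNhd.exists_eq_mul_of_analyticOrderAt_le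
    (fun z _ => hf.analyticAt z) (fun z _ => hg.analyticAt z) fun z _ => hord z
  have hfh : ∀ z, f z = h z * g z := fun z => hfh (mem_univ z)
  have hh : Differentiable ℂ h := fun z => (hh z (mem_univ z)).differentiableAt
  have hper : ∀ {γ c : ℂ}, (∀ z, f (z + γ) = c * f z) → (∀ z, g (z + γ) = c * g z) →
      Periodic h γ := fun hfγ hgγ =>
    hh.periodic_of_mul_quasiPeriodic hg.continuous hgz₀ hgγ fun z => by rw [← hfh, ← hfh, hfγ]
  refine ⟨h z₀, funext fun z => ?_⟩
  rw [hfh, hh.apply_eq_apply_of_periodic_of_linearIndependent hγ (hper hf₁ hg₁) (hper hf₂ hg₂)]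

theorem flat_band_discreteness_general
    (n : ℕ)
    (Ω : Set ℂ) (hΩc : IsConnected Ω)
    (γ₁ γ₂ : ℂ) (hγ : LinearIndependent ℝ ![γ₁, γ₂])
    (Γs : Set ℂ) (hΓs : Γs = {z : ℂ | ∃ a b : ℤ, z = (a : ℂ) * γ₁ + (b : ℂ) * γ₂})
    (Q : ℂ → ℂ → Matrix (Fin n) (Fin n) ℂ)
    (hQ : ∀ i j : Fin n,
      AnalyticOnNhd ℂ (fun p : ℂ × ℂ => Q p.1 p.2 i j) (Ω ×ˢ (Set.univ : Set ℂ)))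
    (WX WY : ℂ → (Matrix (Fin n) (Fin n) ℂ)ˣ)
    (hW : ∀ α ∈ Ω, ∀ k : ℂ, ∀ γ ∈ Γs,
      Q α (k + γ) =
        (↑(WY γ)⁻¹ : Matrix (Fin n) (Fin n) ℂ) * Q α k * (WX γ : Matrix (Fin n) (Fin n) ℂ))
    (m : ℂ → ℂ → ℕ∞)
    (hm_top : ∀ α ∈ Ω, (∀ k : ℂ, (Q α k).det = 0) → ∀ k : ℂ, m α k = ⊤)
    (hm_fin : ∀ α ∈ Ω, ¬ (∀ k : ℂ, (Q α k).det = 0) → ∀ k : ℂ,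
      ∃ (N : ℕ) (g : ℂ → ℂ), m α k = (N : ℕ∞) ∧ AnalyticOnNhd ℂ g Set.univ ∧ g k ≠ 0 ∧
        ∀ k' : ℂ, (Q α k').det = (k' - k) ^ N * g k')
    (α₀ : ℂ) (hα₀ : α₀ ∈ Ω)
    (hyp : ∀ α ∈ Ω, ∀ k : ℂ, m α₀ k ≠ ⊤ ∧ m α₀ k ≤ m α k) :
    ∃ A ⊆ Ω, (∀ z ∈ Ω, ¬ AccPt z (Filter.principal A)) ∧
      (∀ α ∈ A, ∀ k : ℂ, m α k = ⊤) ∧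
      (∀ α ∈ Ω \ A, ∀ k : ℂ, m α k = m α₀ k) := by
  have hdet : AnalyticOnNhd ℂ (fun p : ℂ × ℂ => (Q p.1 p.2).det) (Ω ×ˢ univ) :=
    fun p hp => analyticAt_det fun i j => hQ i j p hp
  have hdet_k : ∀ α ∈ Ω, Differentiable ℂ fun k => (Q α k).det := fun α hα k =>
    ((hdet (α, k) ⟨hα, mem_univ k⟩).comp (analyticAt_const.prod analyticAt_id)).differentiableAt
  have hdet_α : ∀ k, AnalyticOnNhd ℂ (fun α => (Q α k).det) Ω := fun k α hα =>
    (hdet (α, k) ⟨hα, mem_univ k⟩).comp (f := fun α : ℂ => (α, k))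
      (analyticAt_id.prod analyticAt_const)
  have hm : ∀ α ∈ Ω, ∀ k, m α k = analyticOrderAt (fun k => (Q α k).det) k := fun α hα =>
    eq_analyticOrderAt_of_forall_eq_pow_mul (hm_top α hα) (hm_fin α hα)
  have hper : ∀ α ∈ Ω, ∀ k, ∀ γ ∈ Γs, (Q α (k + γ)).det =
      ((↑(WY γ)⁻¹ : Matrix (Fin n) (Fin n) ℂ).det * (WX γ : Matrix (Fin n) (Fin n) ℂ).det) *
        (Q α k).det := by
    intro α hα k γ hγ
    rw [hW α hα k γ hγ, Matrix.det_mul, Matrix.det_mul]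
    ring
  have hγ₁ : γ₁ ∈ Γs := hΓs ▸ ⟨1, 0, by simp⟩
  have hγ₂ : γ₂ ∈ Γs := hΓs ▸ ⟨0, 1, by simp⟩
  obtain ⟨k₂, hk₂⟩ : ∃ k, (Q α₀ k).det ≠ 0 := by
    by_contra! hzero
    exact (hyp α₀ hα₀ 0).1 (hm_top α₀ hα₀ hzero 0)
  have hprop : ∀ α ∈ Ω, ∃ C, (fun k => (Q α k).det) = fun k => C * (Q α₀ k).det :=
    fun α hα => (hdet_k α hα).exists_eq_const_mul_of_quasiPeriodic (hdet_k α₀ hα₀) hk₂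
      (fun k => hm α hα k ▸ hm α₀ hα₀ k ▸ (hyp α hα k).2) hγ
      (hper α hα · γ₁ hγ₁) (hper α₀ hα₀ · γ₁ hγ₁) (hper α hα · γ₂ hγ₂) (hper α₀ hα₀ · γ₂ hγ₂)
  refine ⟨{α ∈ Ω | (Q α k₂).det = 0}, sep_subset _ _,
    fun z hz => (hdet_α k₂).not_accPt_setOf_eq_zero hΩc hα₀ hk₂ hz, ?_, ?_⟩
  · rintro α ⟨hα, hαk₂⟩ k
    obtain ⟨C, hC⟩ := hprop α hα
    have hC0 : C = 0 := by simpa [hk₂, hαk₂] using (congrFun hC k₂).symm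
    exact hm_top α hα (fun k => by simpa [hC0] using congrFun hC k) k
  · rintro α ⟨hα, hαk₂⟩ k
    obtain ⟨C, hC⟩ := hprop α hα
    have hC0 : C ≠ 0 := by rintro rfl; exact hαk₂ ⟨hα, by simpa using congrFun hC k₂⟩
    rw [hm α hα, hm α₀ hα₀, hC, analyticOrderAt_const_mul hC0 ((hdet_k α₀ hα₀).analyticAt k)]

/-- abstract magic-parameter theorem (Theorem 1) in the matrix case.
`m α k` is the order of vanishing of the entire function `k' ↦ det Q(α,k')` at `k`
(and `⊤` if that function vanishes identically); this is pinned down by the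
hypotheses `hm_top` and `hm_fin`. -/
theorem flat_band_discreteness
    (n : ℕ) (hn : 1 ≤ n)
    (Ω : Set ℂ) (hΩne : Ω.Nonempty) (hΩo : IsOpen Ω) (hΩc : IsConnected Ω)
    (γ₁ γ₂ : ℂ) (hγ : LinearIndependent ℝ ![γ₁, γ₂])
    (Γs : Set ℂ) (hΓs : Γs = {z : ℂ | ∃ a b : ℤ, z = (a : ℂ) * γ₁ + (b : ℂ) * γ₂})
    (Q : ℂ → ℂ → Matrix (Fin n) (Fin n) ℂ)
    (hQ : ∀ i j : Fin n,
      AnalyticOnNhd ℂ (fun p : ℂ × ℂ => Q p.1 p.2 i j) (Ω ×ˢ (Set.univ : Set ℂ)))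
    (WX WY : ℂ → (Matrix (Fin n) (Fin n) ℂ)ˣ)
    (hW : ∀ α ∈ Ω, ∀ k : ℂ, ∀ γ ∈ Γs,
      Q α (k + γ) =
        (↑(WY γ)⁻¹ : Matrix (Fin n) (Fin n) ℂ) * Q α k * (WX γ : Matrix (Fin n) (Fin n) ℂ))
    (m : ℂ → ℂ → ℕ∞)
    (hm_top : ∀ α ∈ Ω, (∀ k : ℂ, (Q α k).det = 0) → ∀ k : ℂ, m α k = ⊤)
    (hm_fin : ∀ α ∈ Ω, ¬ (∀ k : ℂ, (Q α k).det = 0) → ∀ k : ℂ,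
      ∃ (N : ℕ) (g : ℂ → ℂ), m α k = (N : ℕ∞) ∧ AnalyticOnNhd ℂ g Set.univ ∧ g k ≠ 0 ∧
        ∀ k' : ℂ, (Q α k').det = (k' - k) ^ N * g k')
    (α₀ : ℂ) (hα₀ : α₀ ∈ Ω)
    (hyp : ∀ α ∈ Ω, ∀ k : ℂ, m α₀ k ≠ ⊤ ∧ m α₀ k ≤ m α k) :
    ∃ A ⊆ Ω, (∀ z ∈ Ω, ¬ AccPt z (Filter.principal A)) ∧
      (∀ α ∈ A, ∀ k : ℂ, m α k = ⊤) ∧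
      (∀ α ∈ Ω \ A, ∀ k : ℂ, m α k = m α₀ k) :=
  flat_band_discreteness_general n Ω hΩc γ₁ γ₂ hγ Γs hΓs Q hQ WX WY hW m hm_top hm_fin α₀ hα₀ hyp
end

section
/- Let U : ℂ → ℂ be smooth, α, k ∈ ℂ, and let Γ := 3Λ where Λ := ℤω + ℤ ⊂ ℂ, ω := e^{2πi/3}. With D(α) and ℛ as below, the map u ↦ ℛu is a ℂ-linear bijection from {u : ℂ → ℂ² smooth, Γ-periodic, (D(α)+k)u = 0} onto {u : ℂ → ℂ² smooth, Γ-periodic, (D(-α)-k)u = 0}. In particular one kernel is nontrivial if and only if the other is. -/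
/-- `(2D_{z̄}f)(z) = (1/i)(∂_{x₁}f(z) + i∂_{x₂}f(z))`, identifying `ℂ ≅ ℝ²`. -/
noncomputable def Dbar2 (f : ℂ → ℂ) (z : ℂ) : ℂ :=
  Complex.I⁻¹ * (fderiv ℝ f z 1 + Complex.I * fderiv ℝ f z Complex.I)

/-- The chiral-model operator `D(α)` with potential `U`. -/
noncomputable def Dop (U : ℂ → ℂ) (α : ℂ) (u : ℂ → ℂ × ℂ) (z : ℂ) : ℂ × ℂ :=
  (Dbar2 (fun w => (u w).1) z + α * U z * (u z).2,
   α * U (-z) * (u z).1 + Dbar2 (fun w => (u w).2) z)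

/-- `(ℛu)(z) = (u₂(-z), u₁(-z))`. -/
def Rop (u : ℂ → ℂ × ℂ) (z : ℂ) : ℂ × ℂ := ((u (-z)).2, (u (-z)).1)

noncomputable def omega : ℂ := Complex.exp (2 * Real.pi * Complex.I / 3)

/-- `Λ = ℤω ⊕ ℤ`. -/
noncomputable def Lambda : Set ℂ := {w | ∃ m n : ℤ, w = (m : ℂ) * omega + (n : ℂ)}

/-- `Γ = 3Λ`. -/
noncomputable def Gamma : Set ℂ := {w | ∃ v ∈ Lambda, w = 3 * v}

/-! `ℛ` is an involution with `D(-α) ℛ = -ℛ D(α)`, because `D_{z̄}` changes sign under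
`z ↦ -z` while the two potential terms `U(z)` and `U(-z)` are swapped along with the components.
Hence `ℛ` maps the kernel of `D(α) + k` into that of `D(-α) - k`, and applying the same fact to
`(-α, -k)` gives the inverse map. -/

-- No differentiability is needed: `fderiv` of `f ∘ neg` is junk exactly where that of `f` is.
lemma Dbar2_comp_neg (f : ℂ → ℂ) (z : ℂ) : Dbar2 (fun w => f (-w)) z = -Dbar2 f (-z) := by
  have h := fderiv_comp_smul (𝕜 := ℝ) (f := f) (x := z) (-1)
  simp only [neg_smul, one_smul] at h
  simp only [Dbar2, h, neg_apply]
  ring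

lemma Dop_Rop (U : ℂ → ℂ) (α : ℂ) (u : ℂ → ℂ × ℂ) (z : ℂ) :
    Dop U (-α) (Rop u) z = -Rop (Dop U α u) z := by
  simp only [Dop, Rop, Dbar2_comp_neg (fun w => (u w).1), Dbar2_comp_neg (fun w => (u w).2),
    neg_neg, Prod.neg_mk, Prod.mk.injEq]
  constructor <;> ring

lemma Rop_involutive : Function.Involutive Rop := fun u => by
  funext z; simp [Rop]

lemma Rop_add (u v : ℂ → ℂ × ℂ) : Rop (u + v) = Rop u + Rop v := rfl

lemma Rop_smul (c : ℂ) (u : ℂ → ℂ × ℂ) : Rop (c • u) = c • Rop u := rfl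

lemma Rop_eq_zero_iff {u : ℂ → ℂ × ℂ} : Rop u = 0 ↔ u = 0 :=
  Rop_involutive.injective.eq_iff' rfl

lemma ContDiff.Rop {n : WithTop ℕ∞} {u : ℂ → ℂ × ℂ} (hu : ContDiff ℝ n u) :
    ContDiff ℝ n (Rop u) :=
  (hu.comp contDiff_neg).snd.prodMk (hu.comp contDiff_neg).fst

lemma neg_mem_Gamma {γ : ℂ} (hγ : γ ∈ Gamma) : -γ ∈ Gamma := by
  obtain ⟨v, ⟨m, n, rfl⟩, rfl⟩ := hγ
  exact ⟨-m * omega + -n, ⟨-m, -n, by push_cast; ring⟩, by ring⟩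

def periodicKernel (U : ℂ → ℂ) (α k : ℂ) : Set (ℂ → ℂ × ℂ) :=
  {u | ContDiff ℝ (⊤ : ℕ∞) u ∧ (∀ z : ℂ, ∀ γ ∈ Gamma, u (z + γ) = u z) ∧
    ∀ z : ℂ, Dop U α u z + k • u z = 0}

lemma periodicKernel_neg (U : ℂ → ℂ) (α k : ℂ) :
    periodicKernel U (-α) (-k) = {u | ContDiff ℝ (⊤ : ℕ∞) u ∧
      (∀ z : ℂ, ∀ γ ∈ Gamma, u (z + γ) = u z) ∧ ∀ z : ℂ, Dop U (-α) u z - k • u z = 0} := by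
  simp only [periodicKernel, neg_smul, ← sub_eq_add_neg]

lemma mapsTo_Rop_periodicKernel (U : ℂ → ℂ) (α k : ℂ) :
    Set.MapsTo Rop (periodicKernel U α k) (periodicKernel U (-α) (-k)) := by
  rintro u ⟨hsmooth, hper, hker⟩
  refine ⟨hsmooth.Rop, fun z γ hγ => ?_, fun z => ?_⟩
  · simp only [Rop, neg_add, hper (-z) (-γ) (neg_mem_Gamma hγ)]
  · have hz : Dop U α u (-z) = -(k • u (-z)) := eq_neg_of_add_eq_zero_left (hker (-z))
    simp only [Dop_Rop, Rop, hz, neg_smul, Prod.neg_mk, Prod.smul_mk, Prod.fst_neg,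
      Prod.snd_neg, Prod.smul_fst, Prod.smul_snd, neg_neg, Prod.mk_add_mk, add_neg_cancel,
      Prod.mk_zero_zero]

lemma bijOn_Rop_periodicKernel (U : ℂ → ℂ) (α k : ℂ) :
    Set.BijOn Rop (periodicKernel U α k) (periodicKernel U (-α) (-k)) := by
  have hinv : Set.InvOn Rop Rop (periodicKernel U α k) (periodicKernel U (-α) (-k)) :=
    ⟨fun u _ => Rop_involutive u, fun u _ => Rop_involutive u⟩
  refine hinv.bijOn (mapsTo_Rop_periodicKernel U α k) ?_
  simpa only [neg_neg] using mapsTo_Rop_periodicKernel U (-α) (-k)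

theorem R_bijects_kernels_general
    (U : ℂ → ℂ) (α k : ℂ) :
    Set.BijOn Rop
      {u : ℂ → ℂ × ℂ | ContDiff ℝ (⊤ : ℕ∞) u ∧ (∀ z : ℂ, ∀ γ ∈ Gamma, u (z + γ) = u z) ∧
        ∀ z : ℂ, Dop U α u z + k • u z = 0}
      {u : ℂ → ℂ × ℂ | ContDiff ℝ (⊤ : ℕ∞) u ∧ (∀ z : ℂ, ∀ γ ∈ Gamma, u (z + γ) = u z) ∧
        ∀ z : ℂ, Dop U (-α) u z - k • u z = 0} ∧
    (∀ u v : ℂ → ℂ × ℂ, Rop (u + v) = Rop u + Rop v) ∧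
    (∀ (c : ℂ) (u : ℂ → ℂ × ℂ), Rop (c • u) = c • Rop u) ∧
    ((∃ u : ℂ → ℂ × ℂ, (ContDiff ℝ (⊤ : ℕ∞) u ∧ (∀ z : ℂ, ∀ γ ∈ Gamma, u (z + γ) = u z) ∧
        ∀ z : ℂ, Dop U α u z + k • u z = 0) ∧ u ≠ 0) ↔
      (∃ u : ℂ → ℂ × ℂ, (ContDiff ℝ (⊤ : ℕ∞) u ∧ (∀ z : ℂ, ∀ γ ∈ Gamma, u (z + γ) = u z) ∧
        ∀ z : ℂ, Dop U (-α) u z - k • u z = 0) ∧ u ≠ 0)) := by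
  have hbij := bijOn_Rop_periodicKernel U α k
  rw [periodicKernel_neg] at hbij
  refine ⟨hbij, Rop_add, Rop_smul, ⟨?_, ?_⟩⟩
  · rintro ⟨u, hu, hne⟩
    exact ⟨Rop u, hbij.mapsTo hu, Rop_eq_zero_iff.not.mpr hne⟩
  · rintro ⟨v, hv, hne⟩
    obtain ⟨u, hu, rfl⟩ := hbij.surjOn hv
    exact ⟨u, hu, Rop_eq_zero_iff.not.mp hne⟩

/-- `ℛ` is a ℂ-linear bijection from the smooth `Γ`-periodic kernel of
`D(α)+k` onto that of `D(-α)-k`; in particular one kernel is nontrivial iff the other is. -/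
theorem R_bijects_kernels
    (U : ℂ → ℂ) (hU : ContDiff ℝ (⊤ : ℕ∞) U) (α k : ℂ) :
    Set.BijOn Rop
      {u : ℂ → ℂ × ℂ | ContDiff ℝ (⊤ : ℕ∞) u ∧ (∀ z : ℂ, ∀ γ ∈ Gamma, u (z + γ) = u z) ∧
        ∀ z : ℂ, Dop U α u z + k • u z = 0}
      {u : ℂ → ℂ × ℂ | ContDiff ℝ (⊤ : ℕ∞) u ∧ (∀ z : ℂ, ∀ γ ∈ Gamma, u (z + γ) = u z) ∧
        ∀ z : ℂ, Dop U (-α) u z - k • u z = 0} ∧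
    (∀ u v : ℂ → ℂ × ℂ, Rop (u + v) = Rop u + Rop v) ∧
    (∀ (c : ℂ) (u : ℂ → ℂ × ℂ), Rop (c • u) = c • Rop u) ∧
    ((∃ u : ℂ → ℂ × ℂ, (ContDiff ℝ (⊤ : ℕ∞) u ∧ (∀ z : ℂ, ∀ γ ∈ Gamma, u (z + γ) = u z) ∧
        ∀ z : ℂ, Dop U α u z + k • u z = 0) ∧ u ≠ 0) ↔
      (∃ u : ℂ → ℂ × ℂ, (ContDiff ℝ (⊤ : ℕ∞) u ∧ (∀ z : ℂ, ∀ γ ∈ Gamma, u (z + γ) = u z) ∧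
        ∀ z : ℂ, Dop U (-α) u z - k • u z = 0) ∧ u ≠ 0)) :=
  R_bijects_kernels_general U α k
end

section
/- Let ω := e^{2πi/3} and let V : ℂ → ℂ be smooth with V(ωz) = conj(ω)·V(z) for all z ∈ ℂ. For α, k ∈ ℂ define Q(α,k)u := (2D_{z̄}+k)((2D_{z̄}+k)u) - α²·V·u on smooth u : ℂ → ℂ. Then for every smooth u : ℂ → ℂ and every z ∈ ℂ, (Q(α,k)(u∘(ω·)))(z) = ω·(Q(α,ωk)u)(ωz), where u∘(ω·) denotes the function z ↦ u(ωz). That is, with (Ωu)(z) := u(ωz), the operator identity Q(α,k)Ω = ωΩQ(α,ωk) holds. -/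
/-- The scalar operator `Q(α,k)u = (2D_{z̄}+k)((2D_{z̄}+k)u) - α²·V·u`. -/
noncomputable def Qsc (V : ℂ → ℂ) (α k : ℂ) (u : ℂ → ℂ) (z : ℂ) : ℂ :=
  Dbar2 (fun w => Dbar2 u w + k * u w) z + k * (Dbar2 u z + k * u z) - α ^ 2 * V z * u z

/-!
Precomposing with `w ↦ ωw` multiplies `2D_{z̄}` by `ω̄` (it scales the antilinear part of the
differential by `ω̄`), and since `|ω| = 1` this gives `(2D_{z̄} + k) Ω = ω̄ Ω (2D_{z̄} + ωk)`.
Applying this twice produces `ω̄² = ω`, and the potential term matches because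
`V(z) = ω V(ωz)`.
-/

open Complex ComplexConjugate

lemma norm_omega : ‖omega‖ = 1 := by
  rw [omega, norm_exp]
  norm_num [div_re]

lemma omega_pow_three : omega ^ 3 = 1 := by
  rw [omega, ← exp_nat_mul]
  convert exp_two_pi_mul_I using 2
  push_cast
  ring

lemma conj_omega_mul_self : conj omega * omega = 1 := by
  rw [conj_mul', norm_omega]
  norm_num

lemma conj_omega_sq : conj omega ^ 2 = omega := by
  linear_combination (conj omega * omega + 1) * omega * conj_omega_mul_self
    - conj omega ^ 2 * omega_pow_three

/-- `L 1 + i L i` is twice the antilinear part of `L`, which is why `conj c` appears. -/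
lemma ContinuousLinearMap.apply_add_I_mul_apply_mul_I (L : ℂ →L[ℝ] ℂ) (c : ℂ) :
    L c + I * L (c * I) = conj c * (L 1 + I * L I) := by
  obtain ⟨x, y, rfl⟩ : ∃ x y : ℝ, c = x + y * I := ⟨c.re, c.im, (re_add_im c).symm⟩
  have hc : (x + y * I : ℂ) = x • (1 : ℂ) + y • I := by simp [real_smul]
  have hcI : (x + y * I) * I = (-y) • (1 : ℂ) + x • I := by
    simp only [real_smul]; push_cast; linear_combination y * I_sq
  rw [hcI, hc, map_add, map_add, L.map_smul, L.map_smul, L.map_smul, L.map_smul, ← hc]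
  simp only [real_smul, map_add, conj_ofReal, map_mul, conj_I]
  push_cast
  linear_combination (y : ℂ) * L I * I_sq

lemma Dbar2_comp_mul_left {f : ℂ → ℂ} {z : ℂ} (c : ℂ) (hf : DifferentiableAt ℝ f (c * z)) :
    Dbar2 (fun w => f (c * w)) z = conj c * Dbar2 f (c * z) := by
  have hderiv : ∀ v, fderiv ℝ (fun w => f (c * w)) z v = fderiv ℝ f (c * z) (c * v) := by
    intro v
    have hmul : HasFDerivAt (fun w : ℂ => c * w) (ContinuousLinearMap.mul ℝ ℂ c) z :=
      (ContinuousLinearMap.mul ℝ ℂ c).hasFDerivAt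
    exact DFunLike.congr_fun (hf.hasFDerivAt.comp z hmul).fderiv v
  simp only [Dbar2, hderiv, mul_one, (fderiv ℝ f (c * z)).apply_add_I_mul_apply_mul_I]
  ring

lemma Dbar2_const_mul {f : ℂ → ℂ} {z : ℂ} (a : ℂ) (hf : DifferentiableAt ℝ f z) :
    Dbar2 (fun w => a * f w) z = a * Dbar2 f z := by
  simp only [Dbar2, fderiv_const_mul hf, smul_apply, smul_eq_mul]
  ring

lemma ContDiff.Dbar2 {f : ℂ → ℂ} {n : WithTop ℕ∞} (hf : ContDiff ℝ (n + 1) f) :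
    ContDiff ℝ n (Dbar2 f) := by
  have hf' := hf.fderiv_right le_rfl
  exact contDiff_const.mul
    ((hf'.clm_apply contDiff_const).add (contDiff_const.mul (hf'.clm_apply contDiff_const)))

/-- The paper's `(2D_{z̄} + k) f`. -/
noncomputable def Dbar2Shift (k : ℂ) (f : ℂ → ℂ) (z : ℂ) : ℂ :=
  Dbar2 f z + k * f z

lemma Qsc_eq_Dbar2Shift (V : ℂ → ℂ) (α k : ℂ) (u : ℂ → ℂ) (z : ℂ) :
    Qsc V α k u z = Dbar2Shift k (Dbar2Shift k u) z - α ^ 2 * V z * u z :=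
  rfl

lemma Dbar2Shift_const_mul {f : ℂ → ℂ} {z : ℂ} (k a : ℂ) (hf : DifferentiableAt ℝ f z) :
    Dbar2Shift k (fun w => a * f w) z = a * Dbar2Shift k f z := by
  rw [Dbar2Shift, Dbar2Shift, Dbar2_const_mul a hf]
  ring

lemma Dbar2Shift_comp_mul_left {f : ℂ → ℂ} {z : ℂ} {c : ℂ} (hc : ‖c‖ = 1) (k : ℂ)
    (hf : DifferentiableAt ℝ f (c * z)) :
    Dbar2Shift k (fun w => f (c * w)) z = conj c * Dbar2Shift (c * k) f (c * z) := by
  have hcc : conj c * c = 1 := by rw [conj_mul', hc]; norm_num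
  rw [Dbar2Shift, Dbar2Shift, Dbar2_comp_mul_left c hf]
  linear_combination -k * f (c * z) * hcc

theorem Qsc_rotation_symmetry_general
    (V : ℂ → ℂ)
    (hVrot : ∀ z : ℂ, V (omega * z) = (starRingEnd ℂ) omega * V z)
    (α k : ℂ) (u : ℂ → ℂ) (hu : ContDiff ℝ (⊤ : ℕ∞) u) (z : ℂ) :
    Qsc V α k (fun w => u (omega * w)) z = omega * Qsc V α (omega * k) u (omega * z) := by
  have hu_diff : Differentiable ℝ u := hu.differentiable (by simp)
  have hshift_diff : Differentiable ℝ (Dbar2Shift (omega * k) u) :=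
    ((hu.of_le (WithTop.coe_le_coe.mpr le_top)).Dbar2 (n := 1)).differentiable one_ne_zero |>.add
      (hu_diff.const_mul _)
  have hrot : Dbar2Shift k (fun w => u (omega * w))
      = fun w => conj omega * Dbar2Shift (omega * k) u (omega * w) :=
    funext fun w => Dbar2Shift_comp_mul_left norm_omega k (hu_diff _)
  have hV : V z = omega * V (omega * z) := by
    rw [hVrot, ← mul_assoc, mul_comm omega, conj_omega_mul_self, one_mul]
  have hrot_diff : DifferentiableAt ℝ (fun w => Dbar2Shift (omega * k) u (omega * w)) z := by
    fun_prop
  calc Qsc V α k (fun w => u (omega * w)) z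
      = Dbar2Shift k (fun w => conj omega * Dbar2Shift (omega * k) u (omega * w)) z
          - α ^ 2 * V z * u (omega * z) := by
        rw [Qsc_eq_Dbar2Shift, hrot]
    _ = conj omega ^ 2 * Dbar2Shift (omega * k) (Dbar2Shift (omega * k) u) (omega * z)
          - α ^ 2 * V z * u (omega * z) := by
        rw [Dbar2Shift_const_mul _ _ hrot_diff,
          Dbar2Shift_comp_mul_left norm_omega k (hshift_diff _)]
        ring
    _ = omega * Qsc V α (omega * k) u (omega * z) := by
        rw [conj_omega_sq, hV, Qsc_eq_Dbar2Shift]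
        ring

/-- the rotation symmetry `Q(α,k)Ω = ωΩQ(α,ωk)` of the scalar model,
where `(Ωu)(z) = u(ωz)` and `V(ωz) = ω̄·V(z)`. -/
theorem Qsc_rotation_symmetry
    (V : ℂ → ℂ) (hV : ContDiff ℝ (⊤ : ℕ∞) V)
    (hVrot : ∀ z : ℂ, V (omega * z) = (starRingEnd ℂ) omega * V z)
    (α k : ℂ) (u : ℂ → ℂ) (hu : ContDiff ℝ (⊤ : ℕ∞) u) (z : ℂ) :
    Qsc V α k (fun w => u (omega * w)) z = omega * Qsc V α (omega * k) u (omega * z) :=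
  Qsc_rotation_symmetry_general V hVrot α k u hu z
end
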